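/- Fix λ > 0, integers d ≥ 1, C ≥ 1, n_s ≥ C, n_t ≥ 1, and a target dataset X_t ∈ ℝ^{n_t×d}, y_t ∈ ℝ^{n_t×C}. Then the infimum over all support sets (X_s, y_s) ∈ ℝ^{n_s×d} × ℝ^{n_s×C} of the KIP loss with linear kernel, (1/2)‖y_t − X_t Xₛᵀ(X_sX_sᵀ + λI)⁻¹ y_s‖²_F, equals the minimum over w ∈ ℝ^{d×C} of the least-squares loss (1/2)‖y_t − X_t w‖²_F; moreover this infimum is attained by some (X_s, y_s), and for any minimizing (X_s, y_s) the matrix w = Xₛᵀ(X_sX_sᵀ + λI)⁻¹ y_s is a least-squares classifier for (X_t, y_t), i.e. a minimizer of w ↦ ‖y_t − X_t w‖²_F. -/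

import Mathlib

/-!
Since `X Xᵀ + λ I` is positive definite, every support set induces coefficients
`w = Xᵀ (X Xᵀ + λ I)⁻¹ y`, and the KIP loss of `(X, y)` is the least-squares loss of `w`.
When `n_s ≥ C` every `w` arises this way: put the columns of `w` into `C` rows of `X` and take
`y = (X Xᵀ + λ I) E` for the matrix `E` selecting those rows. So both losses range over the same
set of values, and the least-squares loss attains its infimum because the image of `w ↦ X_t w`
is a finite-dimensional, hence closed, subspace, which contains a point closest to `y_t`.
-/

open Matrix

noncomputable def froSq {m n : Type*} [Fintype m] [Fintype n]
    (M : Matrix m n ℝ) : ℝ :=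
  ∑ i, ∑ j, (M i j) ^ 2

namespace LinearMap

theorem exists_forall_norm_sub_le {E F : Type*} [AddCommGroup E] [Module ℝ E]
    [NormedAddCommGroup F] [NormedSpace ℝ F] [FiniteDimensional ℝ F]
    (f : E →ₗ[ℝ] F) (y : F) : ∃ x₀, ∀ x, ‖y - f x₀‖ ≤ ‖y - f x‖ := by
  obtain ⟨_, ⟨x₀, rfl⟩, hx₀⟩ :=
    (range f).closed_of_finiteDimensional.exists_infDist_eq_dist ⟨0, (range f).zero_mem⟩ y
  refine ⟨x₀, fun x => ?_⟩
  rw [← dist_eq_norm, ← dist_eq_norm, ← hx₀]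
  exact Metric.infDist_le_dist_of_mem (mem_range_self f x)

end LinearMap

section Frobenius

attribute [local instance] Matrix.frobeniusNormedAddCommGroup Matrix.frobeniusNormedSpace

variable {m n : Type*} [Fintype m] [Fintype n]

theorem froSq_eq_frobenius_norm_sq (M : Matrix m n ℝ) : froSq M = ‖M‖ ^ 2 := by
  rw [frobenius_norm_def, ← Real.sqrt_eq_rpow, Real.sq_sqrt (by positivity), froSq]
  simp [Real.norm_eq_abs, sq_abs]

theorem exists_forall_froSq_sub_mul_le {k : Type*} [Fintype k]
    (X : Matrix m n ℝ) (y : Matrix m k ℝ) :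
    ∃ w₀ : Matrix n k ℝ, ∀ w : Matrix n k ℝ, froSq (y - X * w₀) ≤ froSq (y - X * w) := by
  obtain ⟨w₀, hw₀⟩ := (mulLeftLinearMap k ℝ X).exists_forall_norm_sub_le y
  refine ⟨w₀, fun w => ?_⟩
  simp only [froSq_eq_frobenius_norm_sq]
  exact pow_le_pow_left₀ (norm_nonneg _) (hw₀ w) 2

end Frobenius

theorem posDef_mul_transpose_add_smul_one {m n : Type*} [Fintype m] [Fintype n] [DecidableEq m]
    (X : Matrix m n ℝ) {lam : ℝ} (hlam : 0 < lam) :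
    (X * Xᵀ + lam • (1 : Matrix m m ℝ)).PosDef := by
  have hX := posSemidef_self_mul_conjTranspose X
  rw [conjTranspose_eq_transpose_of_trivial] at hX
  exact PosDef.posSemidef_add hX (PosDef.one.smul hlam)

theorem exists_transpose_mul_inv_mul_eq {m n c : Type*} [Fintype m] [Fintype n] [Fintype c]
    [DecidableEq m] [DecidableEq c] (e : c ↪ m) {lam : ℝ} (hlam : 0 < lam) (w : Matrix n c ℝ) :
    ∃ (X : Matrix m n ℝ) (y : Matrix m c ℝ),
      Xᵀ * (X * Xᵀ + lam • (1 : Matrix m m ℝ))⁻¹ * y = w := by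
  set E : Matrix m c ℝ := (1 : Matrix m m ℝ).submatrix id e
  have hE : Eᵀ * E = 1 := by
    rw [transpose_submatrix, transpose_one, ← submatrix_mul _ _ _ id _ Function.bijective_id,
      Matrix.one_mul, submatrix_one_embedding]
  set K := (E * wᵀ) * (E * wᵀ)ᵀ + lam • (1 : Matrix m m ℝ)
  have hK : IsUnit K.det :=
    (isUnit_iff_isUnit_det K).mp (posDef_mul_transpose_add_smul_one _ hlam).isUnit
  refine ⟨E * wᵀ, K * E, ?_⟩
  rw [Matrix.mul_assoc, ← Matrix.mul_assoc K⁻¹, nonsing_inv_mul K hK, Matrix.one_mul,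
    transpose_mul, transpose_transpose, Matrix.mul_assoc, hE, Matrix.mul_one]

theorem kip_linear_kernel_infimum_least_squares_general
    (d C ns nt : ℕ) (hns : C ≤ ns)
    (lam : ℝ) (hlam : 0 < lam)
    (Xt : Matrix (Fin nt) (Fin d) ℝ) (yt : Matrix (Fin nt) (Fin C) ℝ)
    (L : Matrix (Fin ns) (Fin d) ℝ → Matrix (Fin ns) (Fin C) ℝ → ℝ)
    (hL : ∀ Xs ys, L Xs ys = (1 / 2) * froSq
      (yt - Xt * (Xsᵀ * (Xs * Xsᵀ + lam • (1 : Matrix (Fin ns) (Fin ns) ℝ))⁻¹ * ys)))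
    (lsq : Matrix (Fin d) (Fin C) ℝ → ℝ)
    (hlsq : ∀ w, lsq w = (1 / 2) * froSq (yt - Xt * w)) :
    (∃ Xs ys, ∀ Xs' ys', L Xs ys ≤ L Xs' ys') ∧
    (∃ r : ℝ, IsLeast {r : ℝ | ∃ Xs ys, L Xs ys = r} r ∧
      IsLeast {r : ℝ | ∃ w, lsq w = r} r) ∧
    (∀ Xs ys, (∀ Xs' ys', L Xs ys ≤ L Xs' ys') →
      ∀ w : Matrix (Fin d) (Fin C) ℝ,
        froSq (yt - Xt * (Xsᵀ * (Xs * Xsᵀ + lam • (1 : Matrix (Fin ns) (Fin ns) ℝ))⁻¹ * ys))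
          ≤ froSq (yt - Xt * w)) := by
  have hL_eq_lsq : ∀ Xs ys, L Xs ys =
      lsq (Xsᵀ * (Xs * Xsᵀ + lam • (1 : Matrix (Fin ns) (Fin ns) ℝ))⁻¹ * ys) := fun Xs ys => by
    rw [hL, hlsq]
  obtain ⟨w₀, hw₀⟩ := exists_forall_froSq_sub_mul_le Xt yt
  have hlsq_min : ∀ w, lsq w₀ ≤ lsq w := fun w => by
    rw [hlsq, hlsq]
    linarith [hw₀ w]
  obtain ⟨Xs₀, ys₀, hXs₀⟩ := exists_transpose_mul_inv_mul_eq (Fin.castLEEmb hns) hlam w₀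
  have hL₀ : L Xs₀ ys₀ = lsq w₀ := by rw [hL_eq_lsq, hXs₀]
  have hL_min : ∀ Xs ys, L Xs₀ ys₀ ≤ L Xs ys := fun Xs ys => by
    rw [hL₀, hL_eq_lsq]
    exact hlsq_min _
  refine ⟨⟨Xs₀, ys₀, hL_min⟩, ⟨lsq w₀, ⟨⟨Xs₀, ys₀, hL₀⟩, ?_⟩, ⟨⟨w₀, rfl⟩, ?_⟩⟩, ?_⟩
  · rintro r ⟨Xs, ys, rfl⟩
    exact hL₀ ▸ hL_min Xs ys
  · rintro r ⟨w, rfl⟩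
    exact hlsq_min w
  · intro Xs ys hXs w
    have h := (hXs Xs₀ ys₀).trans (hL₀ ▸ hlsq_min w)
    rw [hL, hlsq] at h
    linarith

/-- For a linear kernel, the infimum of the KIP loss over support sets
`(X_s, y_s)` with `n_s ≥ C` is attained and equals the minimum of the least-squares loss
`w ↦ (1/2)‖y_t − X_t w‖²_F`; moreover, for any minimizing support set, the induced ridge
coefficients `Φ_λ(X_s) y_s` form a least-squares classifier for `(X_t, y_t)`. -/
theorem kip_linear_kernel_infimum_least_squares
    (d C ns nt : ℕ) (hd : 1 ≤ d) (hC : 1 ≤ C) (hns : C ≤ ns) (hnt : 1 ≤ nt)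
    (lam : ℝ) (hlam : 0 < lam)
    (Xt : Matrix (Fin nt) (Fin d) ℝ) (yt : Matrix (Fin nt) (Fin C) ℝ)
    (L : Matrix (Fin ns) (Fin d) ℝ → Matrix (Fin ns) (Fin C) ℝ → ℝ)
    (hL : ∀ Xs ys, L Xs ys = (1 / 2) * froSq
      (yt - Xt * (Xsᵀ * (Xs * Xsᵀ + lam • (1 : Matrix (Fin ns) (Fin ns) ℝ))⁻¹ * ys)))
    (lsq : Matrix (Fin d) (Fin C) ℝ → ℝ)
    (hlsq : ∀ w, lsq w = (1 / 2) * froSq (yt - Xt * w)) :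
    (∃ Xs ys, ∀ Xs' ys', L Xs ys ≤ L Xs' ys') ∧
    (∃ r : ℝ, IsLeast {r : ℝ | ∃ Xs ys, L Xs ys = r} r ∧
      IsLeast {r : ℝ | ∃ w, lsq w = r} r) ∧
    (∀ Xs ys, (∀ Xs' ys', L Xs ys ≤ L Xs' ys') →
      ∀ w : Matrix (Fin d) (Fin C) ℝ,
        froSq (yt - Xt * (Xsᵀ * (Xs * Xsᵀ + lam • (1 : Matrix (Fin ns) (Fin ns) ℝ))⁻¹ * ys))
          ≤ froSq (yt - Xt * w)) :=
  kip_linear_kernel_infimum_least_squares_general d C ns nt hns lam hlam Xt yt L hL lsq hlsq
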